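/- Let α ∈ [0,1), 1 ≤ p < 2/(α+1), and r > 0. There exists C = C(r,α,p) < ∞ such that for every g ∈ C_c^∞((−r,0]²), ‖g‖_{L^p} ≤ C ‖∂_y g‖_{L^{1,α}_x L^1_y}^{1/2} ‖∂_x g‖_{L^1_x L^{1,α}_y}^{1/2}. -/

import Mathlib

open MeasureTheory Real

noncomputable section

/-- Partial derivative in the second (`y`) variable. -/
def pdy (g : ℝ × ℝ → ℝ) (p : ℝ × ℝ) : ℝ := deriv (fun y => g (p.1, y)) p.2

/-- Partial derivative in the first (`x`) variable. -/
def pdx (g : ℝ × ℝ → ℝ) (p : ℝ × ℝ) : ℝ := deriv (fun x => g (x, p.2)) p.1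

/-- A measurable function bounded and supported in a compact interval is integrable. -/
lemma integrable_of_bdd_supp {f : ℝ → ℝ} (hm : AEStronglyMeasurable f volume)
    {a b c : ℝ} (hsupp : ∀ x, x ∉ Set.Icc a b → f x = 0) (hbd : ∀ x, |f x| ≤ c) :
    Integrable f := by
  have hind : Integrable ((Set.Icc a b).indicator (fun _ => c)) := by
    refine (IntegrableOn.integrable_indicator ?_ measurableSet_Icc)
    exact integrableOn_const measure_Icc_lt_top.ne
  refine hind.mono' hm ?_
  refine Filter.Eventually.of_forall fun x => ?_
  by_cases hx : x ∈ Set.Icc a b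
  · simpa [Set.indicator_of_mem hx] using hbd x
  · simp [Set.indicator_of_notMem hx, hsupp x hx]

/-- The weight `|x|^(-β)` is integrable on `Icc (-r) 0` for `β < 1`. -/
lemma integrableOn_abs_rpow_neg {β r : ℝ} (hβ : β < 1) (hr : 0 < r) :
    IntegrableOn (fun x : ℝ => |x| ^ (-β)) (Set.Icc (-r) 0) := by
  rw [integrableOn_Icc_iff_integrableOn_Ioo]
  have h1 : IntegrableOn (fun x : ℝ => x ^ (-β)) (Set.Ioo 0 r) :=
    (intervalIntegral.integrableOn_Ioo_rpow_iff hr).mpr (by linarith)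
  have h2 : IntegrableOn (fun x : ℝ => |x| ^ (-β)) (Set.Ioo 0 r) :=
    h1.congr_fun (fun x hx => by rw [abs_of_pos hx.1]) measurableSet_Ioo
  have h3 := ((Measure.measurePreserving_neg (volume : Measure ℝ)).integrableOn_comp_preimage
      (Homeomorph.neg ℝ).measurableEmbedding).mpr h2
  have h4 : (fun x : ℝ => |x| ^ (-β)) ∘ Neg.neg = fun x : ℝ => |x| ^ (-β) := by
    funext x; simp [Function.comp, abs_neg]
  have h5 : (Neg.neg ⁻¹' Set.Ioo (0:ℝ) r) = Set.Ioo (-r) 0 := by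
    rw [Set.neg_preimage, Set.neg_Ioo, neg_zero]
  rwa [h4, h5] at h3

/-- The Hölder step: for a nonnegative bounded measurable function supported in `[-r,0]`. -/
lemma holder_step {α p r : ℝ} (hα0 : 0 ≤ α) (hp1 : 1 ≤ p) (hp2 : p * (α + 1) < 2)
    (hr : 0 < r) {F : ℝ → ℝ} (hFm : AEStronglyMeasurable F volume) (hFnn : ∀ x, 0 ≤ F x)
    (hFsupp : ∀ x, x ∉ Set.Icc (-r) 0 → F x = 0) {c : ℝ} (hFbd : ∀ x, F x ≤ c) :
    ∫ x, F x ^ (p / 2) ≤ (∫ x, |x| ^ α * F x) ^ (p / 2) *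
      (∫ x in Set.Icc (-r) 0, |x| ^ (-(α * p / (2 - p)))) ^ ((2 - p) / 2) := by
  have hp0 : 0 < p := lt_of_lt_of_le zero_lt_one hp1
  have h2p : 0 < 2 - p := by nlinarith
  set β := α * p / (2 - p) with hβdef
  have hβ0 : 0 ≤ β := by positivity
  have hβ1 : β < 1 := by rw [hβdef, div_lt_one h2p]; nlinarith
  set μ := volume.restrict (Set.Icc (-r) (0:ℝ)) with hμ
  haveI : IsFiniteMeasure μ := ⟨by rw [hμ, Measure.restrict_apply_univ]; exact measure_Icc_lt_top⟩
  have hw : Continuous (fun x : ℝ => |x| ^ α) :=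
    continuous_abs.rpow_const (fun x => Or.inr hα0)
  set φ : ℝ → ℝ := fun x => (|x| ^ α * F x) ^ (p / 2) with hφ
  set ψ : ℝ → ℝ := fun x => |x| ^ (-(α * p / 2)) with hψ
  have hφnn : ∀ x, 0 ≤ φ x := fun x => rpow_nonneg (mul_nonneg (rpow_nonneg (abs_nonneg x) α) (hFnn x)) _
  have hψnn : ∀ x, 0 ≤ ψ x := fun x => rpow_nonneg (abs_nonneg x) _
  have hφm : AEStronglyMeasurable φ μ :=
    ((hw.aemeasurable.mul hFm.aemeasurable).pow aemeasurable_const).aestronglyMeasurable.restrict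
  have hψm : AEStronglyMeasurable ψ μ :=
    (continuous_abs.aemeasurable.pow aemeasurable_const).aestronglyMeasurable.restrict
  -- rewrite full integral as an integral over Icc
  have hstep1 : ∫ x, F x ^ (p / 2) = ∫ x, F x ^ (p / 2) ∂μ := by
    rw [hμ]
    exact (setIntegral_eq_integral_of_forall_compl_eq_zero (fun x hx => by
      rw [hFsupp x hx, Real.zero_rpow (by positivity)])).symm
  -- a.e. identity F^{p/2} = φ * ψ on μ
  have h0 : ∀ᵐ x ∂μ, x ≠ (0:ℝ) := by
    refine ae_restrict_of_ae ?_
    refine ae_iff.mpr ?_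
    simpa using Real.volume_singleton (a := (0:ℝ))
  have hstep2 : ∫ x, F x ^ (p / 2) ∂μ = ∫ x, φ x * ψ x ∂μ := by
    refine integral_congr_ae ?_
    filter_upwards [h0] with x hx
    have h1 : (0:ℝ) < |x| := abs_pos.mpr hx
    simp only [hφ, hψ]
    rw [Real.mul_rpow (rpow_nonneg (abs_nonneg x) α) (hFnn x),
      ← Real.rpow_mul (abs_nonneg x), mul_comm (|x| ^ (α * (p/2))), mul_assoc,
      ← Real.rpow_add h1]
    rw [show α * (p/2) + -(α * p / 2) = 0 by ring, Real.rpow_zero, mul_one]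
  -- conjugate exponents
  have hpq : Real.HolderConjugate (2 / p) (2 / (2 - p)) := by
    constructor
    · rw [inv_div, inv_div, inv_one]; ring
    · positivity
    · positivity
  -- Memℒp facts
  have hc0 : ∀ x, F x ≤ max c 0 := fun x => le_trans (hFbd x) (le_max_left _ _)
  have hφmem : MemLp φ (ENNReal.ofReal (2 / p)) μ := by
    refine MemLp.of_bound hφm ((r ^ α * max c 0) ^ (p / 2)) ?_
    filter_upwards [ae_restrict_mem measurableSet_Icc] with x hx
    rw [Real.norm_eq_abs, abs_of_nonneg (hφnn x)]
    refine Real.rpow_le_rpow (mul_nonneg (rpow_nonneg (abs_nonneg x) α) (hFnn x)) ?_ (by positivity)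
    refine mul_le_mul ?_ (hc0 x) (hFnn x) (by positivity)
    refine Real.rpow_le_rpow (abs_nonneg x) ?_ hα0
    rw [abs_le]; constructor <;> [linarith [hx.1]; linarith [hx.2]]
  have hψeq : ∀ x : ℝ, ψ x ^ (2 / (2 - p)) = |x| ^ (-β) := by
    intro x
    simp only [hψ]
    rw [← Real.rpow_mul (abs_nonneg x)]
    congr 1
    rw [hβdef]; field_simp
  have hψpow : Integrable (fun x : ℝ => ‖ψ x‖ ^ (2 / (2 - p))) μ := by
    have heq : (fun x : ℝ => ‖ψ x‖ ^ (2 / (2 - p))) = fun x : ℝ => |x| ^ (-β) := by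
      funext x
      rw [Real.norm_eq_abs, abs_of_nonneg (hψnn x), hψeq x]
    rw [heq, hμ]
    exact integrableOn_abs_rpow_neg hβ1 hr
  have hψmem : MemLp ψ (ENNReal.ofReal (2 / (2 - p))) μ := by
    have hq0 : ENNReal.ofReal (2 / (2 - p)) ≠ 0 := by
      simp only [ne_eq, ENNReal.ofReal_eq_zero, not_le]
      positivity
    have hqt : ENNReal.ofReal (2 / (2 - p)) ≠ ⊤ := ENNReal.ofReal_ne_top
    have h1 : MemLp (fun x : ℝ => ‖ψ x‖ ^ (ENNReal.ofReal (2 / (2 - p))).toReal)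
        (ENNReal.ofReal (2 / (2 - p)) / ENNReal.ofReal (2 / (2 - p))) μ := by
      rw [ENNReal.div_self hq0 hqt, ENNReal.toReal_ofReal (by positivity)]
      exact memLp_one_iff_integrable.mpr hψpow
    exact (memLp_norm_rpow_iff hψm hq0 hqt).mp h1
  -- Hölder
  have hHolder := integral_mul_le_Lp_mul_Lq_of_nonneg hpq
    (Filter.Eventually.of_forall hφnn) (Filter.Eventually.of_forall hψnn) hφmem hψmem
  -- simplify the right-hand side
  have hφint : (∫ x, φ x ^ (2 / p) ∂μ) = ∫ x, |x| ^ α * F x := by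
    have h1 : ∀ x : ℝ, φ x ^ (2 / p) = |x| ^ α * F x := by
      intro x
      simp only [hφ]
      rw [← Real.rpow_mul (mul_nonneg (rpow_nonneg (abs_nonneg x) α) (hFnn x)),
        show p / 2 * (2 / p) = 1 by field_simp, Real.rpow_one]
    simp only [h1]
    rw [hμ]
    exact setIntegral_eq_integral_of_forall_compl_eq_zero (fun x hx => by
      rw [hFsupp x hx, mul_zero])
  have hψint : (∫ x, ψ x ^ (2 / (2 - p)) ∂μ) = ∫ x in Set.Icc (-r) 0, |x| ^ (-β) := by
    simp only [hψeq]; rfl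
  calc ∫ x, F x ^ (p / 2) = ∫ x, φ x * ψ x ∂μ := by rw [hstep1, hstep2]
    _ ≤ (∫ x, φ x ^ (2 / p) ∂μ) ^ (1 / (2 / p)) *
        (∫ x, ψ x ^ (2 / (2 - p)) ∂μ) ^ (1 / (2 / (2 - p))) := hHolder
    _ = (∫ x, |x| ^ α * F x) ^ (p / 2) *
        (∫ x in Set.Icc (-r) 0, |x| ^ (-β)) ^ ((2 - p) / 2) := by
      rw [hφint, hψint, one_div_div, one_div_div]

/-- For `α ∈ [0,1)`, `1 ≤ p < 2/(α+1)`, `r > 0` there is `C = C(r,α,p)` such that for every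
`g ∈ C_c^∞((-r,0]²)`: `‖g‖_{L^p} ≤ C ‖∂_y g‖_{L^{1,α}_x L^1_y}^{1/2} ‖∂_x g‖_{L^1_x L^{1,α}_y}^{1/2}`. -/
theorem square_Lp_estimate (α p r : ℝ) (hα0 : 0 ≤ α) (hα1 : α < 1)
    (hp1 : 1 ≤ p) (hp2 : p * (α + 1) < 2) (hr : 0 < r) :
    ∃ C : ℝ, 0 < C ∧
      ∀ g : ℝ × ℝ → ℝ, ContDiff ℝ (⊤ : ℕ∞) g → HasCompactSupport g →
        (∀ q : ℝ × ℝ, g q ≠ 0 → q ∈ Set.Ioc (-r) 0 ×ˢ Set.Ioc (-r) 0) →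
        (∫ q : ℝ × ℝ, |g q| ^ p) ^ (1 / p) ≤
          C * Real.sqrt (∫ x : ℝ, |x| ^ α * ∫ y : ℝ, |pdy g (x, y)|)
            * Real.sqrt (∫ x : ℝ, ∫ y : ℝ, |y| ^ α * |pdx g (x, y)|) := by
  have hp0 : 0 < p := lt_of_lt_of_le zero_lt_one hp1
  have h2p : 0 < 2 - p := by nlinarith
  set K : ℝ := (∫ x in Set.Icc (-r) 0, |x| ^ (-(α * p / (2 - p)))) ^ ((2 - p) / 2) with hKdef
  have hK0 : 0 ≤ K :=
    rpow_nonneg (integral_nonneg fun x => rpow_nonneg (abs_nonneg _) _) _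
  refine ⟨(K * K) ^ (1 / p) + 1, by positivity, ?_⟩
  intro g hg hgs hsupp
  have hdiff := hg.differentiable (by simp)
  -- support facts
  have hS : tsupport g ⊆ Set.Icc (-r) 0 ×ˢ Set.Icc (-r) 0 := by
    have h1 : Function.support g ⊆ Set.Ioc (-r) 0 ×ˢ Set.Ioc (-r) 0 := fun q hq => hsupp q hq
    calc tsupport g ⊆ closure (Set.Ioc (-r) 0 ×ˢ Set.Ioc (-r) 0) := closure_mono h1
      _ ⊆ Set.Icc (-r) 0 ×ˢ Set.Icc (-r) 0 := by
          rw [closure_prod_eq, closure_Ioc (show (-r : ℝ) ≠ 0 by linarith)]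
  -- derivatives as fderiv applications
  have hDy : ∀ u : ℝ × ℝ, HasDerivAt (fun y' => g (u.1, y')) (fderiv ℝ g u (0, 1)) u.2 := by
    intro u
    have h1 : HasDerivAt (fun y' : ℝ => ((u.1, y') : ℝ × ℝ)) (0, 1) u.2 :=
      (hasDerivAt_const u.2 u.1).prodMk (hasDerivAt_id u.2)
    have h2 := ((hdiff (u.1, u.2)).hasFDerivAt).comp_hasDerivAt u.2 h1
    exact h2
  have hDx : ∀ u : ℝ × ℝ, HasDerivAt (fun x' => g (x', u.2)) (fderiv ℝ g u (1, 0)) u.1 := by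
    intro u
    have h1 : HasDerivAt (fun x' : ℝ => ((x', u.2) : ℝ × ℝ)) (1, 0) u.1 :=
      (hasDerivAt_id u.1).prodMk (hasDerivAt_const u.1 u.2)
    have h2 := ((hdiff (u.1, u.2)).hasFDerivAt).comp_hasDerivAt u.1 h1
    exact h2
  have hpdy_eq : pdy g = fun u => fderiv ℝ g u (0, 1) := funext fun u => (hDy u).deriv
  have hpdx_eq : pdx g = fun u => fderiv ℝ g u (1, 0) := funext fun u => (hDx u).deriv
  have hDy' : ∀ u : ℝ × ℝ, HasDerivAt (fun y' => g (u.1, y')) (pdy g u) u.2 :=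
    fun u => (hDy u).differentiableAt.hasDerivAt
  have hDx' : ∀ u : ℝ × ℝ, HasDerivAt (fun x' => g (x', u.2)) (pdx g u) u.1 :=
    fun u => (hDx u).differentiableAt.hasDerivAt
  have hDyc : Continuous (pdy g) := by
    rw [hpdy_eq]; exact (hg.continuous_fderiv (by simp)).clm_apply continuous_const
  have hDxc : Continuous (pdx g) := by
    rw [hpdx_eq]; exact (hg.continuous_fderiv (by simp)).clm_apply continuous_const
  have hsuppDy : ∀ u : ℝ × ℝ, u ∉ Set.Icc (-r) 0 ×ˢ Set.Icc (-r) 0 → pdy g u = 0 := by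
    intro u hu
    have h1 : u ∉ tsupport g := fun h => hu (hS h)
    rw [hpdy_eq]
    simp only [fderiv_of_notMem_tsupport _ h1, ContinuousLinearMap.zero_apply]
  have hsuppDx : ∀ u : ℝ × ℝ, u ∉ Set.Icc (-r) 0 ×ˢ Set.Icc (-r) 0 → pdx g u = 0 := by
    intro u hu
    have h1 : u ∉ tsupport g := fun h => hu (hS h)
    rw [hpdx_eq]
    simp only [fderiv_of_notMem_tsupport _ h1, ContinuousLinearMap.zero_apply]
  -- slice integrability
  have hIy : ∀ x : ℝ, Integrable (fun y => |pdy g (x, y)|) := by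
    intro x
    refine (hDyc.comp (continuous_const.prodMk continuous_id)).abs.integrable_of_hasCompactSupport ?_
    refine HasCompactSupport.intro (isCompact_Icc (a := -r) (b := (0:ℝ))) (fun y hy => ?_)
    simp only [Function.comp_apply, id_eq]
    rw [hsuppDy (x, y) (fun hmem => hy hmem.2), abs_zero]
  have hIx : ∀ y : ℝ, Integrable (fun x => |pdx g (x, y)|) := by
    intro y
    refine (hDxc.comp (continuous_id.prodMk continuous_const)).abs.integrable_of_hasCompactSupport ?_
    refine HasCompactSupport.intro (isCompact_Icc (a := -r) (b := (0:ℝ))) (fun x hx => ?_)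
    simp only [Function.comp_apply, id_eq]
    rw [hsuppDx (x, y) (fun hmem => hx hmem.1), abs_zero]
  -- the two marginal functions
  set F : ℝ → ℝ := fun x => ∫ y, |pdy g (x, y)| with hFdef
  set G : ℝ → ℝ := fun y => ∫ x, |pdx g (x, y)| with hGdef
  have hFnn : ∀ x, 0 ≤ F x := fun x => integral_nonneg fun y => abs_nonneg _
  have hGnn : ∀ y, 0 ≤ G y := fun y => integral_nonneg fun x => abs_nonneg _
  have hFm : AEStronglyMeasurable F volume :=
    (hDyc.abs.stronglyMeasurable.integral_prod_right').aestronglyMeasurable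
  have hGm : AEStronglyMeasurable G volume :=
    (hDxc.abs.stronglyMeasurable.integral_prod_left').aestronglyMeasurable
  have hFsupp : ∀ x, x ∉ Set.Icc (-r) 0 → F x = 0 := by
    intro x hx
    simp only [hFdef]
    rw [show (fun y => |pdy g (x, y)|) = fun _ => (0 : ℝ) from funext fun y => by
      rw [hsuppDy (x, y) (fun hmem => hx hmem.1), abs_zero], integral_zero]
  have hGsupp : ∀ y, y ∉ Set.Icc (-r) 0 → G y = 0 := by
    intro y hy
    simp only [hGdef]
    rw [show (fun x => |pdx g (x, y)|) = fun _ => (0 : ℝ) from funext fun x => by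
      rw [hsuppDx (x, y) (fun hmem => hy hmem.2), abs_zero], integral_zero]
  obtain ⟨My, hMy⟩ := hDyc.bounded_above_of_compact_support (by
    rw [hpdy_eq]; exact hgs.fderiv_apply ℝ (0, 1))
  obtain ⟨Mx, hMx⟩ := hDxc.bounded_above_of_compact_support (by
    rw [hpdx_eq]; exact hgs.fderiv_apply ℝ (1, 0))
  have hFbd : ∀ x, F x ≤ My * (volume (Set.Icc (-r) (0 : ℝ))).toReal := by
    intro x
    have h1 : F x = ∫ y in Set.Icc (-r) 0, |pdy g (x, y)| :=
      (setIntegral_eq_integral_of_forall_compl_eq_zero (fun y hy => by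
        rw [hsuppDy (x, y) (fun hmem => hy hmem.2), abs_zero])).symm
    rw [h1]
    refine le_trans (le_trans (le_abs_self _) (le_of_eq (Real.norm_eq_abs _).symm)) ?_
    refine norm_setIntegral_le_of_norm_le_const measure_Icc_lt_top (fun y _ => ?_)
    simpa using hMy (x, y)
  have hGbd : ∀ y, G y ≤ Mx * (volume (Set.Icc (-r) (0 : ℝ))).toReal := by
    intro y
    have h1 : G y = ∫ x in Set.Icc (-r) 0, |pdx g (x, y)| :=
      (setIntegral_eq_integral_of_forall_compl_eq_zero (fun x hx => by
        rw [hsuppDx (x, y) (fun hmem => hx hmem.1), abs_zero])).symm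
    rw [h1]
    refine le_trans (le_trans (le_abs_self _) (le_of_eq (Real.norm_eq_abs _).symm)) ?_
    refine norm_setIntegral_le_of_norm_le_const measure_Icc_lt_top (fun x _ => ?_)
    simpa using hMx (x, y)
  -- pointwise bound |g| ≤ F, |g| ≤ G via FTC
  have hgF : ∀ q : ℝ × ℝ, |g q| ≤ F q.1 := by
    intro q
    by_cases hq : g q = 0
    · rw [hq, abs_zero]; exact hFnn q.1
    · obtain ⟨hqx, hqy⟩ := hsupp q hq
      have h0 : g (q.1, -(r + 1)) = 0 := by
        by_contra h
        have h2 := (hsupp _ h).2.1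
        simp only at h2; linarith
      have hFTC : ∫ t in (-(r + 1))..q.2, pdy g (q.1, t) = g (q.1, q.2) - g (q.1, -(r + 1)) :=
        intervalIntegral.integral_eq_sub_of_hasDerivAt (f := fun y => g (q.1, y))
          (f' := fun t => pdy g (q.1, t)) (fun t _ => hDy' (q.1, t))
          ((show Continuous (fun t : ℝ => pdy g (q.1, t)) from
            hDyc.comp (continuous_const.prodMk continuous_id)).intervalIntegrable _ _)
      have hle : -(r + 1) ≤ q.2 := by have := hqy.1; linarith
      have h2 : |g q| = |∫ t in (-(r + 1))..q.2, pdy g (q.1, t)| := by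
        rw [hFTC, h0, sub_zero]
      rw [h2]
      calc |∫ t in (-(r + 1))..q.2, pdy g (q.1, t)|
          ≤ ∫ t in (-(r + 1))..q.2, |pdy g (q.1, t)| :=
            intervalIntegral.abs_integral_le_integral_abs hle
        _ = ∫ t in Set.Ioc (-(r + 1)) q.2, |pdy g (q.1, t)| :=
            intervalIntegral.integral_of_le hle
        _ ≤ F q.1 := setIntegral_le_integral (hIy q.1)
            (Filter.Eventually.of_forall fun t => abs_nonneg _)
  have hgG : ∀ q : ℝ × ℝ, |g q| ≤ G q.2 := by
    intro q
    by_cases hq : g q = 0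
    · rw [hq, abs_zero]; exact hGnn q.2
    · obtain ⟨hqx, hqy⟩ := hsupp q hq
      have h0 : g (-(r + 1), q.2) = 0 := by
        by_contra h
        have h2 := (hsupp _ h).1.1
        simp only at h2; linarith
      have hFTC : ∫ t in (-(r + 1))..q.1, pdx g (t, q.2) = g (q.1, q.2) - g (-(r + 1), q.2) :=
        intervalIntegral.integral_eq_sub_of_hasDerivAt (f := fun x => g (x, q.2))
          (f' := fun t => pdx g (t, q.2)) (fun t _ => hDx' (t, q.2))
          ((show Continuous (fun t : ℝ => pdx g (t, q.2)) from
            hDxc.comp (continuous_id.prodMk continuous_const)).intervalIntegrable _ _)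
      have hle : -(r + 1) ≤ q.1 := by have := hqx.1; linarith
      have h2 : |g q| = |∫ t in (-(r + 1))..q.1, pdx g (t, q.2)| := by
        rw [hFTC, h0, sub_zero]
      rw [h2]
      calc |∫ t in (-(r + 1))..q.1, pdx g (t, q.2)|
          ≤ ∫ t in (-(r + 1))..q.1, |pdx g (t, q.2)| :=
            intervalIntegral.abs_integral_le_integral_abs hle
        _ = ∫ t in Set.Ioc (-(r + 1)) q.1, |pdx g (t, q.2)| :=
            intervalIntegral.integral_of_le hle
        _ ≤ G q.2 := setIntegral_le_integral (hIx q.2)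
            (Filter.Eventually.of_forall fun t => abs_nonneg _)
  -- product bound
  have hFint : Integrable (fun x => F x ^ (p / 2)) := by
    refine integrable_of_bdd_supp ((hFm.aemeasurable.pow aemeasurable_const).aestronglyMeasurable)
      (fun x hx => by rw [hFsupp x hx, Real.zero_rpow (by positivity)])
      (c := (max (My * (volume (Set.Icc (-r) (0 : ℝ))).toReal) 0) ^ (p / 2)) (fun x => ?_)
    rw [abs_of_nonneg (rpow_nonneg (hFnn x) _)]
    exact Real.rpow_le_rpow (hFnn x) (le_trans (hFbd x) (le_max_left _ _)) (by positivity)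
  have hGint : Integrable (fun y => G y ^ (p / 2)) := by
    refine integrable_of_bdd_supp ((hGm.aemeasurable.pow aemeasurable_const).aestronglyMeasurable)
      (fun y hy => by rw [hGsupp y hy, Real.zero_rpow (by positivity)])
      (c := (max (Mx * (volume (Set.Icc (-r) (0 : ℝ))).toReal) 0) ^ (p / 2)) (fun y => ?_)
    rw [abs_of_nonneg (rpow_nonneg (hGnn y) _)]
    exact Real.rpow_le_rpow (hGnn y) (le_trans (hGbd y) (le_max_left _ _)) (by positivity)
  have hL1 : (∫ q : ℝ × ℝ, |g q| ^ p) ≤ (∫ x, F x ^ (p / 2)) * (∫ y, G y ^ (p / 2)) := by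
    have hprod : Integrable (fun q : ℝ × ℝ => F q.1 ^ (p / 2) * G q.2 ^ (p / 2)) := by
      rw [Measure.volume_eq_prod ℝ ℝ]
      exact hFint.mul_prod hGint
    have hpt : ∀ q : ℝ × ℝ, |g q| ^ p ≤ F q.1 ^ (p / 2) * G q.2 ^ (p / 2) := by
      intro q
      have h2 : |g q| * |g q| ≤ F q.1 * G q.2 :=
        mul_le_mul (hgF q) (hgG q) (abs_nonneg _) (hFnn q.1)
      have h3 : |g q| ^ p = (|g q| * |g q|) ^ (p / 2) := by
        rw [show |g q| * |g q| = |g q| ^ (2 : ℝ) by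
            rw [show (2 : ℝ) = ((2 : ℕ) : ℝ) by norm_num, Real.rpow_natCast]; ring,
          ← Real.rpow_mul (abs_nonneg _), show (2 : ℝ) * (p / 2) = p by ring]
      rw [h3, ← Real.mul_rpow (hFnn q.1) (hGnn q.2)]
      exact Real.rpow_le_rpow (mul_nonneg (abs_nonneg _) (abs_nonneg _)) h2 (by positivity)
    calc (∫ q : ℝ × ℝ, |g q| ^ p) ≤ ∫ q : ℝ × ℝ, F q.1 ^ (p / 2) * G q.2 ^ (p / 2) :=
        integral_mono_of_nonneg
          (Filter.Eventually.of_forall fun q => rpow_nonneg (abs_nonneg _) _) hprod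
          (Filter.Eventually.of_forall hpt)
      _ = (∫ x, F x ^ (p / 2)) * (∫ y, G y ^ (p / 2)) := by
        rw [Measure.volume_eq_prod ℝ ℝ]; exact integral_prod_mul (fun x => F x ^ (p / 2)) (fun y => G y ^ (p / 2))
  -- Hölder estimates
  have hF_est := holder_step hα0 hp1 hp2 hr hFm hFnn hFsupp hFbd
  have hG_est := holder_step hα0 hp1 hp2 hr hGm hGnn hGsupp hGbd
  rw [← hKdef] at hF_est hG_est
  have hA0 : 0 ≤ ∫ x, |x| ^ α * F x :=
    integral_nonneg fun x => mul_nonneg (rpow_nonneg (abs_nonneg _) _) (hFnn x)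
  have hB0 : 0 ≤ ∫ y, |y| ^ α * G y :=
    integral_nonneg fun y => mul_nonneg (rpow_nonneg (abs_nonneg _) _) (hGnn y)
  have hL0 : 0 ≤ ∫ q : ℝ × ℝ, |g q| ^ p :=
    integral_nonneg fun q => rpow_nonneg (abs_nonneg _) _
  -- identify the right-hand side integrals
  have hswap : (∫ x : ℝ, ∫ y : ℝ, |y| ^ α * |pdx g (x, y)|) = ∫ y, |y| ^ α * G y := by
    have hcont : Continuous (fun q : ℝ × ℝ => |q.2| ^ α * |pdx g q|) :=
      ((continuous_abs.comp continuous_snd).rpow_const (fun _ => Or.inr hα0)).mul hDxc.abs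
    have hcs : HasCompactSupport (fun q : ℝ × ℝ => |q.2| ^ α * |pdx g q|) := by
      refine HasCompactSupport.intro ((isCompact_Icc (a := -r) (b := (0:ℝ))).prod (isCompact_Icc (a := -r) (b := (0:ℝ)))) (fun q hq => ?_)
      rw [hsuppDx q hq, abs_zero, mul_zero]
    have hint : Integrable (Function.uncurry fun x y : ℝ => |y| ^ α * |pdx g (x, y)|)
        (volume.prod volume) := by
      have h1 : Integrable (fun q : ℝ × ℝ => |q.2| ^ α * |pdx g q|) volume :=
        hcont.integrable_of_hasCompactSupport hcs
      rw [Measure.volume_eq_prod ℝ ℝ] at h1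
      exact h1
    rw [integral_integral_swap hint]
    refine integral_congr_ae (Filter.Eventually.of_forall fun y => ?_)
    exact integral_const_mul _ _
  rw [hswap]
  -- final computation
  calc (∫ q : ℝ × ℝ, |g q| ^ p) ^ (1 / p)
      ≤ (((∫ x, |x| ^ α * F x) ^ (p / 2) * K) * ((∫ y, |y| ^ α * G y) ^ (p / 2) * K)) ^ (1 / p) := by
        refine Real.rpow_le_rpow hL0 (le_trans hL1 ?_) (by positivity)
        exact mul_le_mul hF_est hG_est
          (integral_nonneg fun y => rpow_nonneg (hGnn y) _)
          (mul_nonneg (rpow_nonneg hA0 _) hK0)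
    _ = (K * K) ^ (1 / p) * Real.sqrt (∫ x, |x| ^ α * F x) * Real.sqrt (∫ y, |y| ^ α * G y) := by
        rw [Real.sqrt_eq_rpow, Real.sqrt_eq_rpow]
        rw [show ((∫ x, |x| ^ α * F x) ^ (p / 2) * K) * ((∫ y, |y| ^ α * G y) ^ (p / 2) * K)
            = (K * K) * ((∫ x, |x| ^ α * F x) ^ (p / 2) * (∫ y, |y| ^ α * G y) ^ (p / 2)) by ring]
        rw [Real.mul_rpow (mul_nonneg hK0 hK0)
            (mul_nonneg (rpow_nonneg hA0 _) (rpow_nonneg hB0 _)),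
          Real.mul_rpow (rpow_nonneg hA0 _) (rpow_nonneg hB0 _),
          ← Real.rpow_mul hA0, ← Real.rpow_mul hB0,
          show p / 2 * (1 / p) = 1 / 2 by field_simp]
        ring
    _ ≤ ((K * K) ^ (1 / p) + 1) * Real.sqrt (∫ x, |x| ^ α * F x) *
        Real.sqrt (∫ y, |y| ^ α * G y) := by
        have h1 : (K * K) ^ (1 / p) ≤ (K * K) ^ (1 / p) + 1 := by linarith
        exact mul_le_mul_of_nonneg_right
          (mul_le_mul_of_nonneg_right h1 (Real.sqrt_nonneg _)) (Real.sqrt_nonneg _)
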